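/- For all n ≥ 1 and all real x with x ≥ 6n, every factor w of Z(n) with |w| ≥ x contains a sub-factor of the form −^d with d ≥ log₂(x/12). -/

import Mathlib

/-- Z(1) = +−, Z(n+1) = + Z(n) Z(n) −. -/
def Zword : ℕ → List ℤ
  | 0 => []
  | n + 1 => 1 :: (Zword n ++ Zword n ++ [-1])

def hasRun (w : List ℤ) (d : ℕ) : Prop :=
  ∃ u z, w = u ++ List.replicate d (-1) ++ z

lemma hasRun_zero (w : List ℤ) : hasRun w 0 := ⟨[], w, by simp⟩

lemma hasRun_cons (a : ℤ) {w : List ℤ} {d : ℕ} (h : hasRun w d) : hasRun (a :: w) d := by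
  obtain ⟨u, z, rfl⟩ := h
  exact ⟨a :: u, z, by simp⟩

lemma hasRun_append_left (v : List ℤ) {w : List ℤ} {d : ℕ} (h : hasRun w d) :
    hasRun (v ++ w) d := by
  obtain ⟨u, z, rfl⟩ := h
  exact ⟨v ++ u, z, by simp⟩

lemma Zword_length (n : ℕ) : (Zword n).length + 2 = 2 ^ (n + 1) := by
  induction n with
  | zero => simp [Zword]
  | succ n ih =>
    have h : (Zword (n + 1)).length = (Zword n).length + (Zword n).length + 2 := by
      simp [Zword]; omega
    have h2 : (2:ℕ) ^ (n + 1 + 1) = 2 ^ (n + 1) + 2 ^ (n + 1) := by ring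
    omega

lemma Zword_tail (n : ℕ) : ∃ B : List ℤ, Zword n = B ++ List.replicate n (-1) := by
  induction n with
  | zero => exact ⟨[], by simp [Zword]⟩
  | succ n ih =>
    obtain ⟨B, hB⟩ := ih
    refine ⟨1 :: (Zword n ++ B), ?_⟩
    rw [Zword, hB, List.replicate_succ']
    simp

/-- suffixes of replicate are replicate -/
lemma suffix_replicate {q e : List ℤ} {n : ℕ} (h : List.replicate n (-1 : ℤ) = q ++ e) :
    e = List.replicate e.length (-1) ∧ e.length ≤ n := by
  constructor
  · rw [List.eq_replicate_length]
    intro b hb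
    have : b ∈ List.replicate n (-1 : ℤ) := by rw [h]; exact List.mem_append_right _ hb
    exact List.eq_of_mem_replicate this
  · have := congrArg List.length h
    simp at this; omega

/-- every prefix of Z(n) has a run −^d with length ≤ 2^(d+2) + n -/
lemma Zword_prefix (n : ℕ) : ∀ w z : List ℤ, Zword n = w ++ z →
    ∃ d, hasRun w d ∧ w.length ≤ 2 ^ (d + 2) + n := by
  induction n with
  | zero =>
    intro w z h
    have hw : w = [] := (List.append_eq_nil_iff.mp (show w ++ z = [] from h.symm)).1
    exact ⟨0, hasRun_zero w, by simp [hw]⟩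
  | succ n ih =>
    intro w z h
    match w with
    | [] => exact ⟨0, hasRun_zero _, by simp⟩
    | a :: w' =>
      rw [Zword, show (a :: w') ++ z = a :: (w' ++ z) from rfl] at h
      obtain ⟨ha, h2⟩ := List.cons_eq_cons.mp h
      have h' : w' ++ z = Zword n ++ (Zword n ++ [-1]) := by
        rw [← h2, List.append_assoc]
      have hZn := Zword_length n
      have hp2 : (2:ℕ) ^ (n + 2) = 2 * 2 ^ (n + 1) := by ring
      have hlc := congrArg List.length h'
      simp only [List.length_append, List.length_cons, List.length_nil] at hlc
      rcases List.append_eq_append_iff.mp h' with ⟨e, he1, he2⟩ | ⟨c, hc1, hc2⟩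
      · -- w' prefix of Zword n
        obtain ⟨d, hr, hl⟩ := ih w' e he1
        refine ⟨d, by rw [← ha]; exact hasRun_cons 1 hr, ?_⟩
        simp only [List.length_cons]; omega
      · -- Zword n is a prefix of w'
        obtain ⟨B, hB⟩ := Zword_tail n
        refine ⟨n, ⟨a :: B, c, by rw [hc1, hB]; simp⟩, ?_⟩
        simp only [List.length_cons]
        omega

/-- every factor of Z(n) has a run −^d with length ≤ 2^(d+2) + 2n -/
lemma Zword_factor (n : ℕ) : ∀ u w z : List ℤ, Zword n = u ++ w ++ z →
    ∃ d, hasRun w d ∧ w.length ≤ 2 ^ (d + 2) + 2 * n := by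
  induction n with
  | zero =>
    intro u w z h
    have h1 : u ++ w = [] := (List.append_eq_nil_iff.mp (show (u ++ w) ++ z = [] from h.symm)).1
    have hw : w = [] := (List.append_eq_nil_iff.mp h1).2
    exact ⟨0, hasRun_zero w, by simp [hw]⟩
  | succ n ih =>
    intro u w z h
    obtain ⟨B, hB⟩ := Zword_tail n
    have hZn := Zword_length n
    have hp2 : (2:ℕ) ^ (n + 2) = 2 * 2 ^ (n + 1) := by ring
    have hp3 : (2:ℕ) ^ (n + 1 + 2) = 4 * 2 ^ (n + 1) := by ring
    match u with
    | [] =>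
      obtain ⟨d, hr, hl⟩ := Zword_prefix (n+1) w z (by simpa using h)
      exact ⟨d, hr, by omega⟩
    | a :: u' =>
      rw [Zword, show (a :: u') ++ w ++ z = a :: (u' ++ (w ++ z)) by simp] at h
      obtain ⟨ha, h2⟩ := List.cons_eq_cons.mp h
      have h' : u' ++ (w ++ z) = Zword n ++ (Zword n ++ [-1]) := by
        rw [← h2, List.append_assoc]
      have hlc := congrArg List.length h'
      simp only [List.length_append, List.length_cons, List.length_nil] at hlc
      rcases List.append_eq_append_iff.mp h' with ⟨e, he1, he2⟩ | ⟨c, hc1, hc2⟩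
      · -- Zword n = u' ++ e,  w ++ z = e ++ (Zword n ++ [-1])
        rcases List.append_eq_append_iff.mp he2 with ⟨f, hf1, hf2⟩ | ⟨g, hg1, hg2⟩
        · -- e = w ++ f : w factor of Zword n
          obtain ⟨d, hr, hl⟩ := ih u' w f (by rw [he1, hf1, List.append_assoc])
          exact ⟨d, hr, by omega⟩
        · -- w = e ++ g, e suffix of Zword n, g prefix of Zword n ++ [-1]
          have heB : u' ++ e = B ++ List.replicate n (-1) := by rw [← he1, hB]
          rcases List.append_eq_append_iff.mp heB with ⟨p, hp1, hp2'⟩ | ⟨q, hq1, hq2⟩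
          · -- e = p ++ replicate n (-1) : w contains run of n
            refine ⟨n, ⟨p, g, by rw [hg1, hp2', List.append_assoc]⟩, ?_⟩
            have hwe := congrArg List.length hg1
            simp only [List.length_append] at hwe
            omega
          · -- replicate n (-1) = q ++ e : e is a run of length ≤ n
            obtain ⟨hek, hkn⟩ := suffix_replicate hq2
            rcases List.append_eq_append_iff.mp hg2.symm with ⟨s, hs1, hs2⟩ | ⟨t, ht1, ht2⟩
            · -- Zword n = g ++ s : g prefix of Zword n
              obtain ⟨d, hr, hl⟩ := Zword_prefix n g s hs1
              refine ⟨d, by rw [hg1]; exact hasRun_append_left e hr, ?_⟩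
              have hwe := congrArg List.length hg1
              simp only [List.length_append] at hwe
              omega
            · -- g = Zword n ++ t : w contains all of Zword n, run of n
              refine ⟨n, ⟨e ++ B, t, by rw [hg1, ht1, hB]; simp⟩, ?_⟩
              have hwe := congrArg List.length hg1
              simp only [List.length_append] at hwe
              omega
      · -- u' = Zword n ++ c,  Zword n ++ [-1] = c ++ (w ++ z)
        rcases List.append_eq_append_iff.mp hc2.symm with ⟨e, he1, he2⟩ | ⟨t, ht1, ht2⟩
        · -- Zword n = c ++ e, w ++ z = e ++ [-1]
          rcases List.append_eq_append_iff.mp he2 with ⟨f, hf1, hf2⟩ | ⟨g, hg1, hg2⟩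
          · -- e = w ++ f : w factor of Zword n
            obtain ⟨d, hr, hl⟩ := ih c w f (by rw [he1, hf1, List.append_assoc])
            exact ⟨d, hr, by omega⟩
          · -- w = e ++ g, [-1] = g ++ z'
            rcases g with _ | ⟨x, g'⟩
            · -- g = [] : w = e, suffix of Zword n
              obtain ⟨d, hr, hl⟩ := ih c w [] (by rw [he1, hg1]; simp)
              exact ⟨d, hr, by omega⟩
            · -- g = x :: g', [-1] = x :: (g' ++ z')
              rw [List.cons_append] at hg2
              obtain ⟨hx, hg'⟩ := List.cons_eq_cons.mp hg2
              have hg'nil : g' = [] := (List.append_eq_nil_iff.mp hg'.symm).1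
              subst hg'nil
              -- w = e ++ [-1], e suffix of Zword n
              have heB : c ++ e = B ++ List.replicate n (-1) := by rw [← he1, hB]
              have hwe := congrArg List.length hg1
              simp only [List.length_append, List.length_cons, List.length_nil] at hwe
              rcases List.append_eq_append_iff.mp heB with ⟨p, hp1, hp2'⟩ | ⟨q, hq1, hq2⟩
              · -- e = p ++ replicate n (-1) : w = p ++ replicate (n+1) (-1)
                refine ⟨n + 1, ⟨p, [], ?_⟩, ?_⟩
                · rw [hg1, hp2', List.replicate_succ', ← hx]; simp
                · omega
              · -- e is a run of length k ≤ n, w = replicate (k+1) (-1)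
                obtain ⟨hek, hkn⟩ := suffix_replicate hq2
                refine ⟨e.length + 1, ⟨[], [], ?_⟩, ?_⟩
                · rw [hg1, List.replicate_succ', ← hek, ← hx]; simp
                · have hb : e.length + 1 ≤ 2 ^ (e.length + 1 + 2) :=
                    le_trans (by omega) (Nat.le_of_lt (Nat.lt_two_pow_self (n := e.length + 1 + 2)))
                  omega
        · -- c = Zword n ++ t, [-1] = t ++ (w ++ z) : w has length ≤ 1
          have hlw : w.length ≤ 1 := by
            have := congrArg List.length ht2
            simp only [List.length_append, List.length_cons, List.length_nil] at this
            omega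
          exact ⟨0, hasRun_zero w, by omega⟩

/-- For x ≥ 6n, every factor of Z(n) of length ≥ x contains a run −^d of
minuses with d ≥ log₂(x/12). -/
theorem Zword_phi (n : ℕ) (hn : 1 ≤ n) (x : ℝ) (hx : 6 * (n : ℝ) ≤ x)
    (u w z : List ℤ) (hfac : Zword n = u ++ w ++ z)
    (hlen : x ≤ (w.length : ℝ)) :
    ∃ (d : ℕ) (u' z' : List ℤ), Real.logb 2 (x / 12) ≤ (d : ℝ) ∧
      w = u' ++ List.replicate d (-1) ++ z' := by
  obtain ⟨d, ⟨u', z', hw⟩, hbound⟩ := Zword_factor n u w z hfac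
  refine ⟨d, u', z', ?_, hw⟩
  have hn' : (1 : ℝ) ≤ (n : ℝ) := by exact_mod_cast hn
  have hxpos : (0 : ℝ) < x := by linarith
  have hwR : (w.length : ℝ) ≤ 2 ^ (d + 2) + 2 * n := by exact_mod_cast hbound
  have hpow : ((2 : ℝ) ^ (d + 2) : ℝ) = 4 * 2 ^ d := by ring
  have h2d : (0 : ℝ) < 2 ^ d := by positivity
  have hkey : x / 12 ≤ (2 : ℝ) ^ d := by
    have h3 : (2 : ℝ) * n ≤ x / 3 := by linarith
    nlinarith [hlen, hwR]
  have hlog : Real.log (x / 12) ≤ Real.log ((2 : ℝ) ^ d) :=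
    Real.log_le_log (by positivity) hkey
  rw [Real.log_pow] at hlog
  have hl2 : (0 : ℝ) < Real.log 2 := Real.log_pos one_lt_two
  rw [Real.logb, div_le_iff₀ hl2]
  exact_mod_cast hlog
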